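/- (Hyperplane induction for double points, with the independence hypotheses supplied by general position made explicit.) Let K be an algebraically closed field of characteristic 0, n ≥ 2, d ≥ 3, and let H ⊂ ℙ^n be the hyperplane {x_n = 0}. Let S be a finite set of r distinct points of ℙ^n, and write S ∩ H for the s points of S lying on H (each represented by a vector with last coordinate 0, hence giving a point of ℙ^{n−1} via the first n coordinates) and S ∖ H for the remaining r − s points. Assume: (i) the double points of S ∩ H, viewed in ℙ^{n−1}, impose independent conditions on degree-d forms in x_0,…,x_{n−1}, i.e., the subspace of degree-d forms in x_0,…,x_{n−1} with all first partials vanishing at each point of S ∩ H has codimension s·n; (ii) the simple points of S ∩ H, viewed in ℙ^{n−1}, impose independent conditions on degree-(d−1) forms in x_0,…,x_{n−1}, i.e., the subspace of degree-(d−1) forms vanishing at each point of S ∩ H has codimension s; and (iii) the double points of S ∖ H impose independent conditions on degree-(d−2) forms in x_0,…,x_n. Then the double points of S impose independent conditions on degree-d forms in x_0,…,x_n, i.e., the subspace of degree-d forms in x_0,…,x_n whose first partials all vanish at every point of S has codimension r(n+1). -/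

import Mathlib

/-!
Let `T` be the degree-`d` forms singular at all points of `S`. Restricting to `H = {xₙ = 0}`
sends `T` into the degree-`d` forms on `H` singular at `S ∩ H`, and a form in the kernel is
`xₙ g`. On `H` we have `∂ₙ (xₙ g) = g`, so `g` vanishes at `S ∩ H`; off `H`, Euler's relation
(characteristic `0`) shows that `g` is singular at `S ∖ H`. Restricting the space of such `g`
to `H` once more, whose kernel is `xₙ` times the degree-`(d-2)` forms singular at `S ∖ H`, gives
`dim T ≤ dim A + dim A' + dim C` with `A`, `A'`, `C` the spaces of (i), (ii), (iii). By the
hypotheses and Pascal's rule the right side is `binom(n+d, d) - r(n+1)`, while `r(n+1)` linear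
conditions never cut the dimension by more than `r(n+1)`.
-/

open MvPolynomial

/-- Homogeneous forms of degree `d` in `N` variables all of whose first-order partial
derivatives vanish at every point of the family `p`. -/
noncomputable def dblVanish (K : Type) [Field K] (N d : ℕ) {ι : Type} (p : ι → (Fin N → K)) :
    Submodule K (MvPolynomial (Fin N) K) :=
  homogeneousSubmodule (Fin N) K d ⊓
    ⨅ (a : ι) (i : Fin N),
      LinearMap.ker ((aeval (p a)).toLinearMap ∘ₗ (pderiv i).toLinearMap)

/-- Homogeneous forms of degree `d` in `N` variables vanishing at every point of `p`. -/
noncomputable def simpleVanish (K : Type) [Field K] (N d : ℕ) {ι : Type}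
    (p : ι → (Fin N → K)) : Submodule K (MvPolynomial (Fin N) K) :=
  homogeneousSubmodule (Fin N) K d ⊓
    ⨅ a : ι, LinearMap.ker (aeval (p a)).toLinearMap

open Module

section Counting

variable (σ R : Type*) [CommRing R]

instance MvPolynomial.finite_homogeneousSubmodule [Finite σ] (D : ℕ) :
    Module.Finite R (homogeneousSubmodule σ R D) :=
  Module.Finite.iff_fg.mpr (homogeneousSubmodule_fg σ R D)

theorem MvPolynomial.finrank_homogeneousSubmodule [Fintype σ] [Nontrivial R] (D : ℕ) :
    finrank R (homogeneousSubmodule σ R D) = (Fintype.card σ).multichoose D := by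
  classical
  have hsupp : {u : σ →₀ ℕ | u.degree = D} = ↑((Finset.univ : Finset σ).finsuppAntidiag D) := by
    ext u
    simp [Finsupp.degree_eq_sum]
  rw [homogeneousSubmodule_eq_finsupp_supported, hsupp, ← restrictSupport,
    finrank_eq_card_basis (basisRestrictSupport R _)]
  simp [Finset.card_finsuppAntidiag_nat_eq_multichoose]

end Counting

section LinearAlgebra

variable {K V W V' : Type*} [DivisionRing K] [AddCommGroup V] [Module K V]
  [AddCommGroup W] [Module K W] [AddCommGroup V'] [Module K V']

theorem Submodule.finrank_map_add_finrank_inf_ker (U : Submodule K V) [FiniteDimensional K U]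
    (f : V →ₗ[K] W) : finrank K (U.map f) + finrank K ↥(U ⊓ LinearMap.ker f) = finrank K U := by
  rw [← LinearMap.finrank_range_add_finrank_ker (f.domRestrict U), LinearMap.range_domRestrict,
    LinearMap.ker_domRestrict, ← Submodule.map_comap_subtype, Submodule.finrank_map_subtype_eq]

theorem Submodule.finrank_le_add_of_map_le_of_inf_ker_le {U : Submodule K V}
    [FiniteDimensional K U] {f : V →ₗ[K] W} {P : Submodule K W} [FiniteDimensional K P]
    {g : V' →ₗ[K] V} {Q : Submodule K V'} [FiniteDimensional K Q]
    (hP : U.map f ≤ P) (hQ : U ⊓ LinearMap.ker f ≤ Q.map g) :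
    finrank K U ≤ finrank K P + finrank K Q := by
  rw [← U.finrank_map_add_finrank_inf_ker f]
  exact add_le_add (Submodule.finrank_mono hP)
    ((Submodule.finrank_mono hQ).trans (Submodule.finrank_map_le g Q))

end LinearAlgebra

section Vanishing

variable {K : Type} [Field K] {N D : ℕ} {ι : Type} {p : ι → Fin N → K}
  {f : MvPolynomial (Fin N) K}

theorem mem_dblVanish :
    f ∈ dblVanish K N D p ↔ f.IsHomogeneous D ∧ ∀ q i, aeval (p q) (pderiv i f) = 0 := by
  simp [dblVanish, Submodule.mem_iInf]

theorem mem_simpleVanish :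
    f ∈ simpleVanish K N D p ↔ f.IsHomogeneous D ∧ ∀ q, aeval (p q) f = 0 := by
  simp [simpleVanish, Submodule.mem_iInf]

instance : FiniteDimensional K (dblVanish K N D p) :=
  Submodule.finiteDimensional_of_le inf_le_left

instance : FiniteDimensional K (simpleVanish K N D p) :=
  Submodule.finiteDimensional_of_le inf_le_left

theorem dblVanish_append {s m : ℕ} (a : Fin s → Fin N → K) (b : Fin m → Fin N → K) :
    dblVanish K N D (Fin.append a b) = dblVanish K N D a ⊓ dblVanish K N D b := by
  ext f
  simp only [Submodule.mem_inf, mem_dblVanish, Fin.forall_fin_add, Fin.append_left,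
    Fin.append_right]
  tauto

variable (p) in
noncomputable def partialsAt : MvPolynomial (Fin N) K →ₗ[K] ι × Fin N → K :=
  LinearMap.pi fun q => (aeval (p q.1)).toLinearMap ∘ₗ (pderiv q.2).toLinearMap

theorem dblVanish_eq_inf_ker_partialsAt :
    dblVanish K N D p = homogeneousSubmodule (Fin N) K D ⊓ LinearMap.ker (partialsAt p) := by
  rw [dblVanish, partialsAt, LinearMap.ker_pi, iInf_prod]

theorem multichoose_le_finrank_dblVanish_add [Fintype ι] (p : ι → Fin N → K) :
    N.multichoose D ≤ finrank K (dblVanish K N D p) + Fintype.card ι * N := by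
  have hforms := finrank_homogeneousSubmodule (Fin N) K D
  have hsplit := (homogeneousSubmodule (Fin N) K D).finrank_map_add_finrank_inf_ker (partialsAt p)
  have himage := ((homogeneousSubmodule (Fin N) K D).map (partialsAt p)).finrank_le
  rw [finrank_fintype_fun_eq_card, Fintype.card_prod, Fintype.card_fin] at himage
  rw [Fintype.card_fin] at hforms
  rw [dblVanish_eq_inf_ker_partialsAt]
  omega

end Vanishing

section Restriction

variable {R : Type*} [CommSemiring R] {n : ℕ}

variable (R n) in
noncomputable def restrictLast : MvPolynomial (Fin (n + 1)) R →ₐ[R] MvPolynomial (Fin n) R :=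
  aeval (Fin.snoc X 0)

@[simp]
theorem restrictLast_X_last : restrictLast R n (X (Fin.last n)) = 0 := by
  simp [restrictLast]

@[simp]
theorem restrictLast_X_castSucc (i : Fin n) : restrictLast R n (X i.castSucc) = X i := by
  simp [restrictLast]

theorem restrictLast_rename_castSucc (g : MvPolynomial (Fin n) R) :
    restrictLast R n (rename Fin.castSucc g) = g := by
  have h : (restrictLast R n).comp (rename Fin.castSucc) = AlgHom.id R _ :=
    algHom_ext fun i => by simp
  exact DFunLike.congr_fun h g

theorem aeval_restrictLast {y : Fin (n + 1) → R} (hy : y (Fin.last n) = 0)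
    (f : MvPolynomial (Fin (n + 1)) R) :
    aeval (y ∘ Fin.castSucc) (restrictLast R n f) = aeval y f := by
  have h : (aeval (y ∘ Fin.castSucc)).comp (restrictLast R n) = aeval y :=
    algHom_ext fun i => Fin.lastCases (by simp [hy]) (fun j => by simp) i
  exact DFunLike.congr_fun h f

theorem pderiv_restrictLast (i : Fin n) (f : MvPolynomial (Fin (n + 1)) R) :
    pderiv i (restrictLast R n f) = restrictLast R n (pderiv i.castSucc f) := by
  induction f using MvPolynomial.induction_on with
  | C r => simp
  | add p q hp hq => simp [hp, hq]
  | mul_X p j hp =>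
    refine Fin.lastCases ?_ (fun k => ?_) j
    · simp
    · by_cases hki : k = i <;> simp [hp, pderiv_X, hki]

theorem MvPolynomial.IsHomogeneous.restrictLast {f : MvPolynomial (Fin (n + 1)) R} {D : ℕ}
    (hf : f.IsHomogeneous D) : (restrictLast R n f).IsHomogeneous D := by
  have hX : ∀ i, (Fin.snoc (α := fun _ => MvPolynomial (Fin n) R) X 0 i).IsHomogeneous 1 :=
    Fin.lastCases (by simpa using isHomogeneous_zero _ _ 1)
      fun j => by simpa using isHomogeneous_X R j
  have h := hf.aeval _ hX
  rwa [one_mul] at h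

theorem X_last_dvd_iff {f : MvPolynomial (Fin (n + 1)) R} :
    X (Fin.last n) ∣ f ↔ restrictLast R n f = 0 := by
  refine ⟨fun ⟨g, hg⟩ => by simp [hg], fun hf => ?_⟩
  -- `f = xₙ q + r` with `r` free of `xₙ`, and restricting to `xₙ = 0` recovers `r`
  have hdecomp := f.divMonomial_add_modMonomial_single (Fin.last n)
  obtain ⟨g, hg⟩ := exists_rename_eq_of_vars_subset_range
    (f.modMonomial (Finsupp.single (Fin.last n) 1)) Fin.castSucc (Fin.castSucc_injective n)
    fun i hi => by
      induction i using Fin.lastCases with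
      | last =>
        obtain ⟨u, hu, hlast⟩ := (mem_vars_iff_mem_support _).mp hi
        exact absurd (coeff_modMonomial_of_le f (Finsupp.single_le_iff.mpr
          (Nat.one_le_iff_ne_zero.mpr (Finsupp.mem_support_iff.mp hlast)))) (mem_support_iff.mp hu)
      | cast j => exact ⟨j, rfl⟩
  have hg0 : g = 0 := by
    have h := congrArg (restrictLast R n) hdecomp
    rwa [map_add, map_mul, restrictLast_X_last, zero_mul, zero_add, ← hg,
      restrictLast_rename_castSucc, hf] at h
  rw [← hdecomp, ← hg, hg0, map_zero, add_zero]
  exact dvd_mul_right _ _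

theorem MvPolynomial.IsHomogeneous.of_mul_X {σ : Type*} {g : MvPolynomial σ R} {i : σ} {D : ℕ}
    (h : (g * X i).IsHomogeneous (D + 1)) : g.IsHomogeneous D := by
  intro u hu
  have := h (show coeff (u + Finsupp.single i 1) (g * X i) ≠ 0 by rwa [coeff_mul_X])
  rw [map_add, Finsupp.weight_single, Pi.one_apply, smul_eq_mul, mul_one] at this
  omega

theorem exists_eq_mul_X_last_of_restrictLast_eq_zero {D : ℕ}
    {f : MvPolynomial (Fin (n + 1)) R} (hf : f.IsHomogeneous (D + 1))
    (h0 : restrictLast R n f = 0) : ∃ g, g.IsHomogeneous D ∧ f = g * X (Fin.last n) := by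
  obtain ⟨g, rfl⟩ := X_last_dvd_iff.mpr h0
  rw [mul_comm] at hf ⊢
  exact ⟨g, hf.of_mul_X, rfl⟩

end Restriction

section Descent

variable {K : Type} [Field K]

theorem MvPolynomial.IsHomogeneous.aeval_eq_zero_of_forall_pderiv [CharZero K] {σ : Type*}
    [Fintype σ] {f : MvPolynomial σ K} {D : ℕ} (hf : f.IsHomogeneous D) (hD : D ≠ 0)
    {y : σ → K} (h : ∀ i, MvPolynomial.aeval y (pderiv i f) = 0) :
    MvPolynomial.aeval y f = 0 := by
  have euler := congrArg (MvPolynomial.aeval y) hf.sum_X_mul_pderiv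
  simp only [map_sum, map_mul, aeval_X, h, mul_zero, Finset.sum_const_zero, map_nsmul] at euler
  simpa [hD] using euler.symm

variable {N D : ℕ} {ι : Type} {p : ι → Fin N → K} {g : MvPolynomial (Fin N) K} {i : Fin N}

theorem mem_simpleVanish_of_mul_X_mem_dblVanish (hp : ∀ q, p q i = 0) (hg : g.IsHomogeneous D)
    (h : g * X i ∈ dblVanish K N (D + 1) p) : g ∈ simpleVanish K N D p := by
  refine mem_simpleVanish.mpr ⟨hg, fun q => ?_⟩
  simpa [hp] using (mem_dblVanish.mp h).2 q i

theorem mem_dblVanish_of_mul_X_mem_dblVanish [CharZero K] (hp : ∀ q, p q i ≠ 0)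
    (hg : g.IsHomogeneous D) (h : g * X i ∈ dblVanish K N (D + 1) p) :
    g ∈ dblVanish K N D p := by
  refine mem_dblVanish.mpr ⟨hg, fun q j => ?_⟩
  have hpartials := (mem_dblVanish.mp h).2 q
  have hgX : IsHomogeneous (g * X i) (D + 1) := hg.mul (isHomogeneous_X K i)
  have hg0 : aeval (p q) g = 0 := by
    simpa [hp q] using hgX.aeval_eq_zero_of_forall_pderiv (Nat.succ_ne_zero D) hpartials
  have hj := hpartials j
  rw [pderiv_mul, map_add, map_mul, map_mul, hg0, zero_mul, add_zero, aeval_X] at hj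
  exact (mul_eq_zero.mp hj).resolve_right (hp q)

end Descent

section Hyperplane

variable {K : Type} [Field K] {n D : ℕ} {ι κ : Type}
  {a : ι → Fin (n + 1) → K} {b : κ → Fin (n + 1) → K}

theorem map_restrictLast_dblVanish_le (ha : ∀ q, a q (Fin.last n) = 0) :
    (dblVanish K (n + 1) D a).map (restrictLast K n).toLinearMap ≤
      dblVanish K n D (fun q => a q ∘ Fin.castSucc) := by
  rintro _ ⟨f, hf, rfl⟩
  rw [SetLike.mem_coe, mem_dblVanish] at hf
  refine mem_dblVanish.mpr ⟨hf.1.restrictLast, fun q i => ?_⟩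
  rw [AlgHom.toLinearMap_apply, pderiv_restrictLast, aeval_restrictLast (ha q)]
  exact hf.2 q _

theorem map_restrictLast_simpleVanish_le (ha : ∀ q, a q (Fin.last n) = 0) :
    (simpleVanish K (n + 1) D a).map (restrictLast K n).toLinearMap ≤
      simpleVanish K n D (fun q => a q ∘ Fin.castSucc) := by
  rintro _ ⟨f, hf, rfl⟩
  rw [SetLike.mem_coe, mem_simpleVanish] at hf
  refine mem_simpleVanish.mpr ⟨hf.1.restrictLast, fun q => ?_⟩
  rw [AlgHom.toLinearMap_apply, aeval_restrictLast (ha q)]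
  exact hf.2 q

variable [CharZero K]

theorem finrank_dblVanish_inf_dblVanish_le (ha : ∀ q, a q (Fin.last n) = 0)
    (hb : ∀ q, b q (Fin.last n) ≠ 0) :
    finrank K ↥(dblVanish K (n + 1) (D + 1) a ⊓ dblVanish K (n + 1) (D + 1) b) ≤
      finrank K (dblVanish K n (D + 1) (fun q => a q ∘ Fin.castSucc)) +
        finrank K ↥(simpleVanish K (n + 1) D a ⊓ dblVanish K (n + 1) D b) := by
  refine Submodule.finrank_le_add_of_map_le_of_inf_ker_le
    (g := LinearMap.mulRight K (X (Fin.last n)))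
    ((Submodule.map_mono inf_le_left).trans (map_restrictLast_dblVanish_le ha)) ?_
  rintro f ⟨⟨hfa, hfb⟩, hker⟩
  obtain ⟨g, hg, rfl⟩ :=
    exists_eq_mul_X_last_of_restrictLast_eq_zero (mem_dblVanish.mp hfa).1 hker
  exact ⟨g, ⟨mem_simpleVanish_of_mul_X_mem_dblVanish ha hg hfa,
    mem_dblVanish_of_mul_X_mem_dblVanish hb hg hfb⟩, rfl⟩

theorem finrank_simpleVanish_inf_dblVanish_le (ha : ∀ q, a q (Fin.last n) = 0)
    (hb : ∀ q, b q (Fin.last n) ≠ 0) :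
    finrank K ↥(simpleVanish K (n + 1) (D + 1) a ⊓ dblVanish K (n + 1) (D + 1) b) ≤
      finrank K (simpleVanish K n (D + 1) (fun q => a q ∘ Fin.castSucc)) +
        finrank K (dblVanish K (n + 1) D b) := by
  refine Submodule.finrank_le_add_of_map_le_of_inf_ker_le
    (g := LinearMap.mulRight K (X (Fin.last n)))
    ((Submodule.map_mono inf_le_left).trans (map_restrictLast_simpleVanish_le ha)) ?_
  rintro f ⟨⟨hfa, hfb⟩, hker⟩
  obtain ⟨g, hg, rfl⟩ :=
    exists_eq_mul_X_last_of_restrictLast_eq_zero (mem_simpleVanish.mp hfa).1 hker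
  exact ⟨g, mem_dblVanish_of_mul_X_mem_dblVanish hb hg hfb, rfl⟩

end Hyperplane

theorem veronese_hyperplane_induction
    {K : Type} [Field K] [CharZero K]
    (n d s m : ℕ) (hn : 2 ≤ n) (hd : 3 ≤ d)
    (a : Fin s → (Fin (n + 1) → K)) (b : Fin m → (Fin (n + 1) → K))
    (haH : ∀ i, a i (Fin.last n) = 0)
    (hbH : ∀ i, b i (Fin.last n) ≠ 0)
    (hi : Module.finrank K ↥(dblVanish K n d (fun i => a i ∘ Fin.castSucc)) + s * n
        = Nat.choose (n - 1 + d) d)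
    (hii : Module.finrank K ↥(simpleVanish K n (d - 1) (fun i => a i ∘ Fin.castSucc)) + s
        = Nat.choose (n - 1 + (d - 1)) (d - 1))
    (hiii : Module.finrank K ↥(dblVanish K (n + 1) (d - 2) b) + m * (n + 1)
        = Nat.choose (n + (d - 2)) (d - 2)) :
    Module.finrank K ↥(dblVanish K (n + 1) d (Fin.append a b)) + (s + m) * (n + 1)
      = Nat.choose (n + d) d := by
  have hT := finrank_dblVanish_inf_dblVanish_le (D := d - 1) haH hbH
  have hB := finrank_simpleVanish_inf_dblVanish_le (D := d - 2) haH hbH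
  rw [show d - 1 + 1 = d by omega] at hT
  rw [show d - 2 + 1 = d - 1 by omega] at hB
  have hlow := multichoose_le_finrank_dblVanish_add (D := d) (Fin.append a b)
  rw [Fintype.card_fin, dblVanish_append] at hlow
  have pascal : (n + 1).multichoose d =
      n.multichoose d + n.multichoose (d - 1) + (n + 1).multichoose (d - 2) := by
    obtain ⟨e, rfl⟩ : ∃ e, d = e + 2 := ⟨d - 2, by omega⟩
    rw [Nat.multichoose_succ_succ, Nat.add_sub_cancel, show e + 2 - 1 = e + 1 from rfl,
      Nat.multichoose_succ_succ]
    ring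
  rw [show n - 1 + d = n + d - 1 by omega, ← Nat.multichoose_eq] at hi
  rw [show n - 1 + (d - 1) = n + (d - 1) - 1 by omega, ← Nat.multichoose_eq] at hii
  rw [show n + (d - 2) = n + 1 + (d - 2) - 1 by omega, ← Nat.multichoose_eq] at hiii
  rw [show n + d = n + 1 + d - 1 by omega, ← Nat.multichoose_eq, dblVanish_append]
  have hcount : (s + m) * (n + 1) = s * n + s + m * (n + 1) := by ring
  omega
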